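/- Let W be the ℂ-linear span, inside the complex matrices indexed by Fin d × Fin d, of the set {I_d ⊗ₖ M : M an arbitrary d×d complex matrix} ∪ {Z^a ⊗ₖ T : 1 ≤ a ≤ d−1, T a d×d complex matrix with trace T = 0}. Then I_d ⊗ₖ Z ∈ W and Z ⊗ₖ Z^{d−1} ∈ W, but their matrix product (I_d ⊗ₖ Z) · (Z ⊗ₖ Z^{d−1}) = Z ⊗ₖ I_d ∉ W. In particular, W is not closed under matrix multiplication (it is not an algebra). -/

import Mathlib

open Matrix Kronecker

/-- The diagonal matrix Z with Z[j,j] = ω^j, ω = exp(2πi/d). -/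
noncomputable def Zmat (d : ℕ) : Matrix (Fin d) (Fin d) ℂ :=
  Matrix.diagonal fun j => Complex.exp (2 * Real.pi * Complex.I / d) ^ (j : ℕ)

/-- The span W of {I ⊗ M} ∪ {Zᵃ ⊗ T : 1 ≤ a ≤ d−1, tr T = 0}. -/
noncomputable def Wspan (d : ℕ) : Submodule ℂ (Matrix (Fin d × Fin d) (Fin d × Fin d) ℂ) :=
  Submodule.span ℂ
    ({X | ∃ M : Matrix (Fin d) (Fin d) ℂ, X = (1 : Matrix (Fin d) (Fin d) ℂ) ⊗ₖ M} ∪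
     {X | ∃ a : ℕ, 1 ≤ a ∧ a ≤ d - 1 ∧
        ∃ T : Matrix (Fin d) (Fin d) ℂ, T.trace = 0 ∧ X = ((Zmat d) ^ a) ⊗ₖ T})

/-!
The linear functional `X ↦ tr ((Z⁻¹ ⊗ I) X)`, with `Z⁻¹ = Z^(d-1)`, vanishes on every generator
of `W`: on `I ⊗ M` it is `tr Z⁻¹ · tr M`, on `Zᵃ ⊗ T` it is `tr Z^(a-1) · tr T`, and
`tr Zᵏ = ∑ⱼ (ωᵏ)ʲ = 0` unless `d ∣ k`. On `Z ⊗ I` it equals `tr I · tr I = d² ≠ 0`.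
-/

lemma geom_sum_eq_zero_of_pow_eq_one {K : Type*} [Field K] {x : K} {n : ℕ}
    (hx : x ≠ 1) (hxn : x ^ n = 1) : ∑ i ∈ Finset.range n, x ^ i = 0 := by
  rw [geom_sum_eq hx, hxn, sub_self, zero_div]

lemma Matrix.trace_kronecker_mul_kronecker {m n α : Type*} [Fintype m] [Fintype n]
    [CommSemiring α] (A C : Matrix m m α) (B D : Matrix n n α) :
    ((A ⊗ₖ B) * (C ⊗ₖ D)).trace = (A * C).trace * (B * D).trace := by
  rw [← mul_kronecker_mul, trace_kronecker]

lemma Zmat_pow (d a : ℕ) :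
    Zmat d ^ a =
      diagonal fun j : Fin d => (Complex.exp (2 * Real.pi * Complex.I / d) ^ a) ^ (j : ℕ) := by
  rw [Zmat, diagonal_pow]
  congr 1
  funext j
  rw [Pi.pow_apply, ← pow_mul, ← pow_mul, Nat.mul_comm]

lemma trace_Zmat_pow {d a : ℕ} (ha : ¬ d ∣ a) : (Zmat d ^ a).trace = 0 := by
  obtain rfl | hd := eq_or_ne d 0
  · simp [trace]
  have hω := Complex.isPrimitiveRoot_exp d hd
  rw [Zmat_pow, trace_diagonal, Fin.sum_univ_eq_sum_range (fun j => _ ^ j)]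
  refine geom_sum_eq_zero_of_pow_eq_one (mt (hω.pow_eq_one_iff_dvd a).mp ha) ?_
  rw [← pow_mul, Nat.mul_comm, pow_mul, hω.pow_eq_one, one_pow]

lemma Zmat_pow_self (d : ℕ) : Zmat d ^ d = 1 := by
  obtain rfl | hd := eq_or_ne d 0
  · exact Subsingleton.elim _ _
  rw [Zmat_pow, (Complex.isPrimitiveRoot_exp d hd).pow_eq_one]
  simp

lemma Zmat_mul_pow_pred {d : ℕ} (hd : d ≠ 0) : Zmat d * Zmat d ^ (d - 1) = 1 := by
  rw [mul_pow_sub_one hd, Zmat_pow_self]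

lemma one_kronecker_mem_Wspan (d : ℕ) (M : Matrix (Fin d) (Fin d) ℂ) : 1 ⊗ₖ M ∈ Wspan d :=
  Submodule.subset_span (Or.inl ⟨M, rfl⟩)

lemma Zmat_pow_kronecker_mem_Wspan {d a : ℕ} (ha₁ : 1 ≤ a) (ha : a ≤ d - 1)
    {T : Matrix (Fin d) (Fin d) ℂ} (hT : T.trace = 0) : (Zmat d ^ a) ⊗ₖ T ∈ Wspan d :=
  Submodule.subset_span (Or.inr ⟨a, ha₁, ha, T, hT, rfl⟩)

lemma Wspan_le_ker_trace_mul {d : ℕ} (hd : 2 ≤ d) :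
    Wspan d ≤
      LinearMap.ker (traceLinearMap _ ℂ ℂ ∘ₗ LinearMap.mulLeft ℂ ((Zmat d ^ (d - 1)) ⊗ₖ 1)) := by
  rw [Wspan, Submodule.span_le]
  rintro X (⟨M, rfl⟩ | ⟨a, -, -, T, hT, rfl⟩) <;>
    simp only [SetLike.mem_coe, LinearMap.mem_ker, LinearMap.comp_apply, LinearMap.mulLeft_apply,
      traceLinearMap_apply, trace_kronecker_mul_kronecker]
  · rw [mul_one, trace_Zmat_pow (Nat.not_dvd_of_pos_of_lt (by omega) (by omega)), zero_mul]
  · rw [one_mul, hT, mul_zero]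

lemma Zmat_kronecker_one_not_mem_Wspan {d : ℕ} (hd : 2 ≤ d) :
    Zmat d ⊗ₖ (1 : Matrix (Fin d) (Fin d) ℂ) ∉ Wspan d := by
  intro hmem
  have hzero : (((Zmat d ^ (d - 1)) ⊗ₖ 1) * (Zmat d ⊗ₖ (1 : Matrix (Fin d) (Fin d) ℂ))).trace = 0 :=
    Wspan_le_ker_trace_mul hd hmem
  rw [trace_kronecker_mul_kronecker, ← pow_succ, Nat.sub_add_cancel (by omega), Zmat_pow_self,
    mul_one, trace_one, Fintype.card_fin] at hzero
  exact (Nat.cast_ne_zero.mpr (by omega : d ≠ 0)) (mul_self_eq_zero.mp hzero)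

theorem stmt_12 (d : ℕ) (hd : 2 ≤ d) :
    (1 : Matrix (Fin d) (Fin d) ℂ) ⊗ₖ Zmat d ∈ Wspan d ∧
    Zmat d ⊗ₖ ((Zmat d) ^ (d - 1)) ∈ Wspan d ∧
    ((1 : Matrix (Fin d) (Fin d) ℂ) ⊗ₖ Zmat d) * (Zmat d ⊗ₖ ((Zmat d) ^ (d - 1))) =
      Zmat d ⊗ₖ (1 : Matrix (Fin d) (Fin d) ℂ) ∧
    Zmat d ⊗ₖ (1 : Matrix (Fin d) (Fin d) ℂ) ∉ Wspan d := by
  refine ⟨one_kronecker_mem_Wspan d _, ?_, ?_, Zmat_kronecker_one_not_mem_Wspan hd⟩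
  · simpa only [pow_one] using Zmat_pow_kronecker_mem_Wspan (d := d) le_rfl (by omega)
      (trace_Zmat_pow (Nat.not_dvd_of_pos_of_lt (by omega) (by omega)))
  · rw [← mul_kronecker_mul, one_mul, Zmat_mul_pow_pred (by omega)]
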